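/- Let 0 < α < n, 1 < r < n/α, 0 < λ < n − αr, 1/q = 1/r − α/(n−λ), and b locally integrable on ℚ_p^n. If the maximal commutator M_{α,b}^p is bounded from the p-adic Morrey space L^{r,λ}(ℚ_p^n) to L^{q,λ}(ℚ_p^n), then b ∈ BMO(ℚ_p^n). -/

import Mathlib

open MeasureTheory ENNReal

/-- The closed `p`-adic ball in `ℚ_p^n` of radius `p^γ` centered at `x`. -/
noncomputable def pBall (p : ℕ) [Fact p.Prime] (n : ℕ) (γ : ℤ) (x : Fin n → ℚ_[p]) :
    Set (Fin n → ℚ_[p]) := Metric.closedBall x ((p : ℝ) ^ γ)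

/-- The `p`-adic fractional maximal function
`M_α^p(f)(x) = sup_γ |B_γ(x)|^{α/n−1} ∫_{B_γ(x)} |f|`. -/
noncomputable def fracMax (p : ℕ) [Fact p.Prime] (n : ℕ)
    [MeasurableSpace (Fin n → ℚ_[p])] (μ : Measure (Fin n → ℚ_[p])) (α : ℝ)
    (f : (Fin n → ℚ_[p]) → ℝ) (x : Fin n → ℚ_[p]) : ENNReal :=
  ⨆ γ : ℤ, μ (pBall p n γ x) ^ (α / n - 1) *
    ∫⁻ y in pBall p n γ x, ENNReal.ofReal |f y| ∂μ

/-- The maximal commutator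
`M_{α,b}^p(f)(x) = sup_γ |B_γ(x)|^{α/n−1} ∫_{B_γ(x)} |b(x)−b(y)||f(y)| dy`. -/
noncomputable def maxComm (p : ℕ) [Fact p.Prime] (n : ℕ)
    [MeasurableSpace (Fin n → ℚ_[p])] (μ : Measure (Fin n → ℚ_[p])) (α : ℝ)
    (b f : (Fin n → ℚ_[p]) → ℝ) (x : Fin n → ℚ_[p]) : ENNReal :=
  ⨆ γ : ℤ, μ (pBall p n γ x) ^ (α / n - 1) *
    ∫⁻ y in pBall p n γ x, ENNReal.ofReal (|b x - b y| * |f y|) ∂μ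

/-- The nonlinear commutator `[b, M_α^p](f) = b · M_α^p(f) − M_α^p(b f)` (as a real
number, via `ENNReal.toReal`). -/
noncomputable def nonlinComm (p : ℕ) [Fact p.Prime] (n : ℕ)
    [MeasurableSpace (Fin n → ℚ_[p])] (μ : Measure (Fin n → ℚ_[p])) (α : ℝ)
    (b f : (Fin n → ℚ_[p]) → ℝ) (x : Fin n → ℚ_[p]) : ℝ :=
  b x * (fracMax p n μ α f x).toReal -
    (fracMax p n μ α (fun y => b y * f y) x).toReal

/-- The local fractional maximal function relative to the ball `B = B_{γ₀}(x₀)`: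
`M_{α,B}^p(b)(y) = sup_{B_γ(y) ⊆ B} |B_γ(y)|^{α/n−1} ∫_{B_γ(y)} |b|`. -/
noncomputable def localFracMax (p : ℕ) [Fact p.Prime] (n : ℕ)
    [MeasurableSpace (Fin n → ℚ_[p])] (μ : Measure (Fin n → ℚ_[p])) (α : ℝ)
    (γ₀ : ℤ) (x₀ : Fin n → ℚ_[p]) (b : (Fin n → ℚ_[p]) → ℝ)
    (y : Fin n → ℚ_[p]) : ENNReal :=
  ⨆ (γ : ℤ) (_ : pBall p n γ y ⊆ pBall p n γ₀ x₀),
    μ (pBall p n γ y) ^ (α / n - 1) *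
      ∫⁻ z in pBall p n γ y, ENNReal.ofReal |b z| ∂μ

/-- The `p`-adic BMO seminorm `sup_B |B|^{−1} ∫_B |b − b_B|`. -/
noncomputable def bmoNorm (p : ℕ) [Fact p.Prime] (n : ℕ)
    [MeasurableSpace (Fin n → ℚ_[p])] (μ : Measure (Fin n → ℚ_[p]))
    (b : (Fin n → ℚ_[p]) → ℝ) : ENNReal :=
  ⨆ (γ : ℤ) (x : Fin n → ℚ_[p]), (μ (pBall p n γ x))⁻¹ *
    ∫⁻ y in pBall p n γ x, ENNReal.ofReal |b y - ⨍ z in pBall p n γ x, b z ∂μ| ∂μ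

/-- The `p`-adic Morrey norm `‖f‖_{L^{r,λ}} = sup_B (|B|^{−λ/n} ∫_B |f|^r)^{1/r}` of a
real-valued function. -/
noncomputable def morreyNorm (p : ℕ) [Fact p.Prime] (n : ℕ)
    [MeasurableSpace (Fin n → ℚ_[p])] (μ : Measure (Fin n → ℚ_[p]))
    (r lam : ℝ) (f : (Fin n → ℚ_[p]) → ℝ) : ENNReal :=
  ⨆ (γ : ℤ) (x : Fin n → ℚ_[p]),
    (μ (pBall p n γ x) ^ (-(lam / n)) *
      ∫⁻ y in pBall p n γ x, ENNReal.ofReal |f y| ^ r ∂μ) ^ (1 / r)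

/-- The `p`-adic Morrey norm of an `ℝ≥0∞`-valued function. -/
noncomputable def morreyNormE (p : ℕ) [Fact p.Prime] (n : ℕ)
    [MeasurableSpace (Fin n → ℚ_[p])] (μ : Measure (Fin n → ℚ_[p]))
    (r lam : ℝ) (g : (Fin n → ℚ_[p]) → ENNReal) : ENNReal :=
  ⨆ (γ : ℤ) (x : Fin n → ℚ_[p]),
    (μ (pBall p n γ x) ^ (-(lam / n)) *
      ∫⁻ y in pBall p n γ x, g y ^ r ∂μ) ^ (1 / r)

/-! Test the boundedness on `f = χ_B` for a ball `B`. Since `|B ∩ B'| ≤ min(|B|, |B'|)`, the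
Morrey norm of `χ_B` is at most `|B|^{(1-λ/n)/r}`. Every point of a `p`-adic ball is a centre of
it, so for `x ∈ B` the ball `B` itself occurs in the supremum defining `M_{α,b}^p(χ_B)(x)`,
whence `|b(x) - b_B| ≤ |B|^{-α/n} M_{α,b}^p(χ_B)(x)`. Hölder's inequality and the Morrey bound
for `M_{α,b}^p(χ_B)` then give `|B|^{-1} ∫_B |b - b_B| ≤ C |B|^e` with
`e = (1 - λ/n)(1/r - 1/q) - α/n`, and the relation between `q`, `r` and `λ` is exactly `e = 0`. -/

namespace ENNReal

theorem rpow_neg_mul_le_rpow_one_sub {a b m : ℝ≥0∞} {θ : ℝ} (hθ₀ : 0 ≤ θ) (hθ₁ : θ ≤ 1)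
    (ha₀ : a ≠ 0) (ha : a ≠ ⊤) (hma : m ≤ a) (hmb : m ≤ b) :
    a ^ (-θ) * m ≤ b ^ (1 - θ) := by
  rcases eq_or_ne m 0 with rfl | hm₀
  · simp
  have hm : m ≠ ⊤ := ne_top_of_le_ne_top ha hma
  have hθ : 0 ≤ 1 - θ := sub_nonneg.2 hθ₁
  calc a ^ (-θ) * m = a ^ (-θ) * m ^ θ * m ^ (1 - θ) := by
        rw [mul_assoc, ← rpow_add _ _ hm₀ hm, add_sub_cancel, rpow_one]
    _ ≤ a ^ (-θ) * a ^ θ * b ^ (1 - θ) := by gcongr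
    _ = b ^ (1 - θ) := by rw [← rpow_add _ _ ha₀ ha, neg_add_cancel, rpow_zero, one_mul]

end ENNReal

theorem ofReal_abs_sub_setAverage_le {X : Type*} [MeasurableSpace X] {μ : Measure X}
    {s : Set X} (hs₀ : μ s ≠ 0) (hs : μ s ≠ ⊤) {b : X → ℝ} (hb : IntegrableOn b s μ) (c : ℝ) :
    ENNReal.ofReal |c - ⨍ y in s, b y ∂μ| ≤ (μ s)⁻¹ * ∫⁻ y in s, ENNReal.ofReal |c - b y| ∂μ := by
  have : IsProbabilityMeasure ((μ s)⁻¹ • μ.restrict s) :=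
    ⟨by rw [Measure.smul_apply, Measure.restrict_apply_univ, smul_eq_mul,
      ENNReal.inv_mul_cancel hs₀ hs]⟩
  have hb' : Integrable b ((μ s)⁻¹ • μ.restrict s) := hb.smul_measure (ENNReal.inv_ne_top.2 hs₀)
  have : c - ⨍ y in s, b y ∂μ = ∫ y, (c - b y) ∂(μ s)⁻¹ • μ.restrict s := by
    rw [setAverage_eq', integral_sub (integrable_const c) hb', integral_const, probReal_univ,
      one_smul]
  rw [this, ← smul_eq_mul, ← lintegral_smul_measure]
  simpa only [Real.enorm_eq_ofReal_abs] using enorm_integral_le_lintegral_enorm fun y => c - b y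

theorem setLIntegral_le_rpow_mul_measure {X : Type*} [MeasurableSpace X] {μ : Measure X}
    {s : Set X} {g : X → ℝ≥0∞} (hg : AEMeasurable g (μ.restrict s)) {q : ℝ} (hq : 1 ≤ q) :
    ∫⁻ x in s, g x ∂μ ≤ (∫⁻ x in s, g x ^ q ∂μ) ^ (1 / q) * μ s ^ (1 - 1 / q) := by
  simpa [eLpNorm', enorm_eq_self] using
    eLpNorm'_le_eLpNorm'_mul_rpow_measure_univ one_pos hq hg.aestronglyMeasurable

theorem rpow_setLIntegral_rpow_le_mul {X : Type*} [MeasurableSpace X] {μ : Measure X}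
    {s : Set X} (hs : MeasurableSet s) {f g : X → ℝ≥0∞} {c : ℝ≥0∞} (hc : c ≠ ⊤) {q : ℝ}
    (hq : 0 < q) (hfg : ∀ x ∈ s, f x ≤ c * g x) :
    (∫⁻ x in s, f x ^ q ∂μ) ^ (1 / q) ≤ c * (∫⁻ x in s, g x ^ q ∂μ) ^ (1 / q) := by
  calc (∫⁻ x in s, f x ^ q ∂μ) ^ (1 / q)
      ≤ (∫⁻ x in s, c ^ q * g x ^ q ∂μ) ^ (1 / q) := by
        gcongr ?_ ^ _
        refine setLIntegral_mono' hs fun x hx => ?_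
        rw [← ENNReal.mul_rpow_of_nonneg _ _ hq.le]
        exact ENNReal.rpow_le_rpow (hfg x hx) hq.le
    _ = c * (∫⁻ x in s, g x ^ q ∂μ) ^ (1 / q) := by
        rw [lintegral_const_mul' _ _ (ENNReal.rpow_ne_top_of_nonneg hq.le hc),
          ENNReal.mul_rpow_of_nonneg _ _ (by positivity), ← ENNReal.rpow_mul,
          mul_one_div_cancel hq.ne', ENNReal.rpow_one]

section PAdic

variable {p : ℕ} [Fact p.Prime] {n : ℕ}

theorem pBall_eq_of_mem {γ : ℤ} {x x₀ : Fin n → ℚ_[p]} (hx : x ∈ pBall p n γ x₀) :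
    pBall p n γ x = pBall p n γ x₀ :=
  (IsUltrametricDist.closedBall_eq_of_mem hx).symm

variable [MeasurableSpace (Fin n → ℚ_[p])] {μ : Measure (Fin n → ℚ_[p])}

theorem measurableSet_pBall [OpensMeasurableSpace (Fin n → ℚ_[p])] (γ : ℤ)
    (x : Fin n → ℚ_[p]) : MeasurableSet (pBall p n γ x) :=
  measurableSet_closedBall

theorem measure_pBall_ne_zero [μ.IsOpenPosMeasure] (γ : ℤ) (x : Fin n → ℚ_[p]) :
    μ (pBall p n γ x) ≠ 0 :=
  (Metric.measure_closedBall_pos μ x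
    (zpow_pos (by exact_mod_cast (Fact.out : p.Prime).pos) γ)).ne'

theorem measure_pBall_ne_top [IsFiniteMeasureOnCompacts μ] (γ : ℤ) (x : Fin n → ℚ_[p]) :
    μ (pBall p n γ x) ≠ ⊤ :=
  measure_closedBall_lt_top.ne

theorem morreyNorm_indicator_one_le [μ.IsOpenPosMeasure] [IsFiniteMeasureOnCompacts μ]
    {s : Set (Fin n → ℚ_[p])} (hs : MeasurableSet s) {r lam : ℝ} (hr : 0 < r)
    (hlam₀ : 0 ≤ lam) (hlam : lam ≤ n) :
    morreyNorm p n μ r lam (s.indicator 1) ≤ μ s ^ ((1 - lam / n) / r) := by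
  refine iSup₂_le fun γ x => ?_
  have hrpow (y) :
      ENNReal.ofReal |s.indicator (1 : (Fin n → ℚ_[p]) → ℝ) y| ^ r = s.indicator 1 y := by
    by_cases hy : y ∈ s <;> simp [hy, hr]
  simp only [hrpow, lintegral_indicator_one hs, Measure.restrict_apply hs]
  rw [show (1 - lam / n) / r = (1 - lam / n) * (1 / r) by ring, ENNReal.rpow_mul]
  gcongr
  exact ENNReal.rpow_neg_mul_le_rpow_one_sub (div_nonneg hlam₀ (Nat.cast_nonneg n))
    (div_le_one_of_le₀ hlam (Nat.cast_nonneg n)) (measure_pBall_ne_zero γ x)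
    (measure_pBall_ne_top γ x) (measure_mono Set.inter_subset_right)
    (measure_mono Set.inter_subset_left)

theorem measure_rpow_mul_setLIntegral_le_maxComm [BorelSpace (Fin n → ℚ_[p])] (α : ℝ)
    (b : (Fin n → ℚ_[p]) → ℝ) {γ : ℤ} {x x₀ : Fin n → ℚ_[p]} (hx : x ∈ pBall p n γ x₀) :
    μ (pBall p n γ x₀) ^ (α / n - 1) * ∫⁻ y in pBall p n γ x₀, ENNReal.ofReal |b x - b y| ∂μ ≤
      maxComm p n μ α b ((pBall p n γ x₀).indicator 1) x := by
  refine le_iSup_of_le γ ?_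
  rw [pBall_eq_of_mem hx]
  gcongr _ * ?_
  refine (setLIntegral_congr_fun (measurableSet_pBall γ x₀) fun y hy => ?_).le
  simp [Set.indicator_of_mem hy]

theorem rpow_setLIntegral_pBall_rpow_le_morreyNormE [μ.IsOpenPosMeasure]
    [IsFiniteMeasureOnCompacts μ] {q : ℝ} (hq : 0 < q) (lam : ℝ) (g : (Fin n → ℚ_[p]) → ℝ≥0∞)
    (γ : ℤ) (x : Fin n → ℚ_[p]) :
    (∫⁻ y in pBall p n γ x, g y ^ q ∂μ) ^ (1 / q) ≤
      μ (pBall p n γ x) ^ (lam / n / q) * morreyNormE p n μ q lam g := by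
  set ν := μ (pBall p n γ x)
  have hν₀ : ν ≠ 0 := measure_pBall_ne_zero γ x
  have hν : ν ≠ ⊤ := measure_pBall_ne_top γ x
  calc (∫⁻ y in pBall p n γ x, g y ^ q ∂μ) ^ (1 / q)
      = (ν ^ (lam / n) * (ν ^ (-(lam / n)) * ∫⁻ y in pBall p n γ x, g y ^ q ∂μ)) ^ (1 / q) := by
        rw [← mul_assoc, ← ENNReal.rpow_add _ _ hν₀ hν, add_neg_cancel, ENNReal.rpow_zero,
          one_mul]
    _ = ν ^ (lam / n / q) *
          (ν ^ (-(lam / n)) * ∫⁻ y in pBall p n γ x, g y ^ q ∂μ) ^ (1 / q) := by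
        rw [ENNReal.mul_rpow_of_nonneg _ _ (by positivity), ← ENNReal.rpow_mul, mul_one_div]
    _ ≤ ν ^ (lam / n / q) * morreyNormE p n μ q lam g := by
        gcongr
        exact le_iSup₂ (f := fun γ x => (μ (pBall p n γ x) ^ (-(lam / n)) *
          ∫⁻ y in pBall p n γ x, g y ^ q ∂μ) ^ (1 / q)) γ x

theorem ofReal_abs_sub_setAverage_le_maxComm [BorelSpace (Fin n → ℚ_[p])] [μ.IsOpenPosMeasure]
    [IsFiniteMeasureOnCompacts μ] (α : ℝ) {b : (Fin n → ℚ_[p]) → ℝ} {γ : ℤ}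
    {x x₀ : Fin n → ℚ_[p]} (hb : IntegrableOn b (pBall p n γ x₀) μ) (hx : x ∈ pBall p n γ x₀) :
    ENNReal.ofReal |b x - ⨍ y in pBall p n γ x₀, b y ∂μ| ≤
      μ (pBall p n γ x₀) ^ (-(α / n)) * maxComm p n μ α b ((pBall p n γ x₀).indicator 1) x := by
  have hν₀ := measure_pBall_ne_zero (μ := μ) γ x₀
  have hν := measure_pBall_ne_top (μ := μ) γ x₀
  calc ENNReal.ofReal |b x - ⨍ y in pBall p n γ x₀, b y ∂μ|
      ≤ (μ (pBall p n γ x₀))⁻¹ * ∫⁻ y in pBall p n γ x₀, ENNReal.ofReal |b x - b y| ∂μ :=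
        ofReal_abs_sub_setAverage_le hν₀ hν hb _
    _ = μ (pBall p n γ x₀) ^ (-(α / n)) * (μ (pBall p n γ x₀) ^ (α / n - 1) *
          ∫⁻ y in pBall p n γ x₀, ENNReal.ofReal |b x - b y| ∂μ) := by
        rw [← mul_assoc, ← ENNReal.rpow_add _ _ hν₀ hν,
          show -(α / n) + (α / n - 1) = -1 by ring, ENNReal.rpow_neg_one]
    _ ≤ _ := by gcongr _ * ?_; exact measure_rpow_mul_setLIntegral_le_maxComm α b hx

theorem mean_oscillation_pBall_le_of_morreyNormE_maxComm_le [BorelSpace (Fin n → ℚ_[p])]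
    [μ.IsOpenPosMeasure] [IsFiniteMeasureOnCompacts μ] {α r q lam : ℝ} (hq : 1 ≤ q)
    (hexp : (1 - lam / n) * (1 / r - 1 / q) = α / n) {b : (Fin n → ℚ_[p]) → ℝ} {γ : ℤ}
    {x₀ : Fin n → ℚ_[p]} (hb : IntegrableOn b (pBall p n γ x₀) μ) {C : ℝ≥0∞}
    (hM : morreyNormE p n μ q lam (maxComm p n μ α b ((pBall p n γ x₀).indicator 1)) ≤
      C * μ (pBall p n γ x₀) ^ ((1 - lam / n) / r)) :
    (μ (pBall p n γ x₀))⁻¹ *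
      ∫⁻ y in pBall p n γ x₀, ENNReal.ofReal |b y - ⨍ z in pBall p n γ x₀, b z ∂μ| ∂μ ≤ C := by
  set B := pBall p n γ x₀
  set ν := μ B
  set M := maxComm p n μ α b (B.indicator 1)
  have hν₀ : ν ≠ 0 := measure_pBall_ne_zero γ x₀
  have hν : ν ≠ ⊤ := measure_pBall_ne_top γ x₀
  have hq₀ : 0 < q := zero_lt_one.trans_le hq
  have hg : AEMeasurable (fun y => ENNReal.ofReal |b y - ⨍ z in B, b z ∂μ|) (μ.restrict B) :=
    (hb.aestronglyMeasurable.aemeasurable.sub_const _).abs.ennreal_ofReal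
  calc ν⁻¹ * ∫⁻ y in B, ENNReal.ofReal |b y - ⨍ z in B, b z ∂μ| ∂μ
      ≤ ν⁻¹ * ((∫⁻ y in B, ENNReal.ofReal |b y - ⨍ z in B, b z ∂μ| ^ q ∂μ) ^ (1 / q) *
          ν ^ (1 - 1 / q)) := by
        gcongr; exact setLIntegral_le_rpow_mul_measure hg hq
    _ ≤ ν⁻¹ * (ν ^ (-(α / n)) * (∫⁻ y in B, M y ^ q ∂μ) ^ (1 / q) * ν ^ (1 - 1 / q)) := by
        gcongr
        exact rpow_setLIntegral_rpow_le_mul (measurableSet_pBall γ x₀)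
          (ENNReal.rpow_ne_top_of_ne_zero hν₀ hν) hq₀
          fun y hy => ofReal_abs_sub_setAverage_le_maxComm α hb hy
    _ ≤ ν⁻¹ * (ν ^ (-(α / n)) * (ν ^ (lam / n / q) * (C * ν ^ ((1 - lam / n) / r))) *
          ν ^ (1 - 1 / q)) := by
        gcongr
        exact (rpow_setLIntegral_pBall_rpow_le_morreyNormE hq₀ lam M γ x₀).trans (by gcongr)
    _ = C * (ν ^ (-1 : ℝ) * ν ^ (-(α / n)) * ν ^ (lam / n / q) * ν ^ ((1 - lam / n) / r) *
          ν ^ (1 - 1 / q)) := by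
        rw [ENNReal.rpow_neg_one]; ring
    _ = C := by
        simp only [← ENNReal.rpow_add _ _ hν₀ hν]
        rw [show -1 + -(α / n) + lam / n / q + (1 - lam / n) / r + (1 - 1 / q) = 0 by
          linear_combination hexp, ENNReal.rpow_zero, mul_one]

end PAdic

theorem one_le_of_one_div_eq_sub_div {α r q d : ℝ} (hα : 0 ≤ α) (hr : 1 ≤ r) (hd : α * r < d)
    (hq : 1 / q = 1 / r - α / d) : 1 ≤ q := by
  have hr₀ : 0 < r := zero_lt_one.trans_le hr
  have hd₀ : 0 < d := (mul_nonneg hα hr₀.le).trans_lt hd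
  have hq₀ : 0 < 1 / q := by
    rw [hq, sub_pos, div_lt_div_iff₀ hd₀ hr₀]
    linarith
  have hq₁ : 1 / q ≤ 1 / 1 := by
    rw [hq, div_one]
    linarith [div_le_one_of_le₀ hr hr₀.le, div_nonneg hα hd₀.le]
  exact le_of_one_div_le_one_div (one_div_pos.1 hq₀) hq₁

theorem one_sub_div_mul_sub_eq {α r q lam n : ℝ} (hn : n ≠ 0) (hlam : n - lam ≠ 0)
    (hq : 1 / q = 1 / r - α / (n - lam)) : (1 - lam / n) * (1 / r - 1 / q) = α / n := by
  rw [hq]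
  field_simp
  ring

theorem maxComm_morrey_bounded_implies_bmo_general (p : ℕ) [Fact p.Prime] (n : ℕ)
    [MeasurableSpace (Fin n → ℚ_[p])] [BorelSpace (Fin n → ℚ_[p])]
    (μ : Measure (Fin n → ℚ_[p])) [μ.IsAddHaarMeasure]
    (α : ℝ) (hα₀ : 0 < α)
    (b : (Fin n → ℚ_[p]) → ℝ) (hbloc : LocallyIntegrable b μ)
    (r q lam : ℝ) (hr : 1 < r)
    (hlam₀ : 0 < lam) (hlam : lam < n - α * r)
    (hq : 1 / q = 1 / r - α / (n - lam))
    (hbound : ∃ C : ENNReal, C ≠ ⊤ ∧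
      ∀ f : (Fin n → ℚ_[p]) → ℝ, Measurable f → morreyNorm p n μ r lam f ≠ ⊤ →
        morreyNormE p n μ q lam (maxComm p n μ α b f) ≤
          C * morreyNorm p n μ r lam f) :
    bmoNorm p n μ b ≠ ⊤ := by
  obtain ⟨C, hC, hMC⟩ := hbound
  have hαr : 0 < α * r := mul_pos hα₀ (zero_lt_one.trans hr)
  have hlam_lt : lam < n := by linarith
  have hq₁ : 1 ≤ q := one_le_of_one_div_eq_sub_div hα₀.le hr.le (by linarith) hq
  have hexp := one_sub_div_mul_sub_eq (by linarith) (by linarith) hq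
  refine ne_top_of_le_ne_top hC (iSup₂_le fun γ x₀ => ?_)
  have hB := measurableSet_pBall (p := p) (n := n) γ x₀
  have hχ := morreyNorm_indicator_one_le (μ := μ) hB (zero_lt_one.trans hr) hlam₀.le hlam_lt.le
  refine mean_oscillation_pBall_le_of_morreyNormE_maxComm_le hq₁ hexp
    (hbloc.integrableOn_isCompact (isCompact_closedBall _ _)) ?_
  refine (hMC _ (measurable_one.indicator hB) (ne_top_of_le_ne_top ?_ hχ)).trans (by gcongr)
  exact ENNReal.rpow_ne_top_of_ne_zero (measure_pBall_ne_zero γ x₀) (measure_pBall_ne_top γ x₀)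

/-- If `0 < α < n`, `1 < r < n/α`, `0 < λ < n − αr`, `1/q = 1/r − α/(n−λ)`, and the
maximal commutator `M_{α,b}^p` is bounded from the `p`-adic Morrey space `L^{r,λ}(ℚ_p^n)`
to `L^{q,λ}(ℚ_p^n)`, then `b ∈ BMO(ℚ_p^n)`. -/
theorem maxComm_morrey_bounded_implies_bmo (p : ℕ) [Fact p.Prime] (n : ℕ)
    [MeasurableSpace (Fin n → ℚ_[p])] [BorelSpace (Fin n → ℚ_[p])]
    (μ : Measure (Fin n → ℚ_[p])) [μ.IsAddHaarMeasure]
    (hμ : μ (Metric.closedBall 0 1) = 1)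
    (α : ℝ) (hα₀ : 0 < α) (hαn : α < n)
    (b : (Fin n → ℚ_[p]) → ℝ) (hbloc : LocallyIntegrable b μ)
    (r q lam : ℝ) (hr : 1 < r) (hrn : r < n / α)
    (hlam₀ : 0 < lam) (hlam : lam < n - α * r)
    (hq : 1 / q = 1 / r - α / (n - lam))
    (hbound : ∃ C : ENNReal, C ≠ ⊤ ∧
      ∀ f : (Fin n → ℚ_[p]) → ℝ, Measurable f → morreyNorm p n μ r lam f ≠ ⊤ →
        morreyNormE p n μ q lam (maxComm p n μ α b f) ≤
          C * morreyNorm p n μ r lam f) :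
    bmoNorm p n μ b ≠ ⊤ :=
  maxComm_morrey_bounded_implies_bmo_general p n μ α hα₀ b hbloc r q lam hr hlam₀ hlam hq hbound
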